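/- arXiv:2506.20210 — 6 statements merged into one kernel-verified Lean document; each statement's English description precedes it below -/
import Mathlib

section
/- Let q ≥ 2 be an integer and n an odd positive integer, and set m = (q^n + 1)/(q + 1). Then gcd(m, q^2 - q + 1) equals q^2 - q + 1 if 3 divides n, and equals 1 otherwise. -/
/-- Let `q ≥ 2` be an integer, `n` an odd positive integer, and `m = (q^n+1)/(q+1)`.
Then `gcd(m, q^2 - q + 1)` equals `q^2 - q + 1` if `3 ∣ n`, and equals `1` otherwise. -/
theorem gcd_m_q_sq_sub_q_add_one (q n : ℕ) (hq : 2 ≤ q) (hn : Odd n) (hn0 : 0 < n) :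
    Nat.gcd ((q ^ n + 1) / (q + 1)) (q ^ 2 - q + 1) =
      if 3 ∣ n then q ^ 2 - q + 1 else 1 := by
  set m := (q ^ n + 1) / (q + 1) with hm_def
  have hqq : q ≤ q ^ 2 := by nlinarith
  have hdvd1 : q + 1 ∣ q ^ n + 1 := by
    simpa using Odd.nat_add_dvd_pow_add_pow q 1 hn
  have hm : m * (q + 1) = q ^ n + 1 := Nat.div_mul_cancel hdvd1
  have hd3 : (q + 1) * (q ^ 2 - q + 1) = q ^ 3 + 1 := by
    zify [hqq]; ring
  by_cases h3 : 3 ∣ n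
  · rw [if_pos h3]
    obtain ⟨k, hk⟩ := h3
    have hk_odd : Odd k := by
      subst hk; rw [Nat.odd_iff] at hn ⊢; omega
    have hdvd2 : q ^ 3 + 1 ∣ q ^ n + 1 := by
      have := Odd.nat_add_dvd_pow_add_pow (q ^ 3) 1 hk_odd
      simpa [← pow_mul, ← hk] using this
    have hdm : (q ^ 2 - q + 1) ∣ m := by
      rcases hdvd2 with ⟨c, hc⟩
      refine ⟨c, ?_⟩
      have hme : m * (q + 1) = ((q ^ 2 - q + 1) * c) * (q + 1) := by
        rw [hm, hc, ← hd3]; ring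
      exact Nat.eq_of_mul_eq_mul_right (by omega) hme
    exact Nat.gcd_eq_right hdm
  · rw [if_neg h3]
    by_contra hg
    set g := Nat.gcd m (q ^ 2 - q + 1) with hg_def
    have hp : (Nat.minFac g).Prime := Nat.minFac_prime hg
    set p := Nat.minFac g with hp_def
    have hpm : p ∣ m := (Nat.minFac_dvd g).trans (Nat.gcd_dvd_left _ _)
    have hpd : p ∣ q ^ 2 - q + 1 := (Nat.minFac_dvd g).trans (Nat.gcd_dvd_right _ _)
    have hpn : p ∣ q ^ n + 1 := hpm.trans ⟨q + 1, hm.symm⟩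
    have hp3 : p ∣ q ^ 3 + 1 := hpd.trans ⟨q + 1, by rw [← hd3]; ring⟩
    haveI : Fact p.Prime := ⟨hp⟩
    -- work in ZMod p
    have hx3 : (q : ZMod p) ^ 3 = -1 := by
      have h0 : ((q ^ 3 + 1 : ℕ) : ZMod p) = 0 :=
        (ZMod.natCast_eq_zero_iff _ _).mpr hp3
      push_cast at h0
      linear_combination h0
    have hxn : (q : ZMod p) ^ n = -1 := by
      have h0 : ((q ^ n + 1 : ℕ) : ZMod p) = 0 :=
        (ZMod.natCast_eq_zero_iff _ _).mpr hpn
      push_cast at h0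
      linear_combination h0
    have h6 : (q : ZMod p) ^ 6 = 1 := by
      have : ((q : ZMod p) ^ 3) ^ 2 = 1 := by rw [hx3]; ring
      calc (q : ZMod p) ^ 6 = ((q : ZMod p) ^ 3) ^ 2 := by ring
        _ = 1 := this
    have h2n : (q : ZMod p) ^ (n * 2) = 1 := by
      rw [pow_mul, hxn]; ring
    have hord6 : orderOf (q : ZMod p) ∣ 6 := orderOf_dvd_of_pow_eq_one h6
    have hord2n : orderOf (q : ZMod p) ∣ n * 2 := orderOf_dvd_of_pow_eq_one h2n
    have hgcd : Nat.gcd 6 (n * 2) = 2 := by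
      have hc : Nat.gcd 3 n = 1 := ((Nat.Prime.coprime_iff_not_dvd (by norm_num)).mpr h3)
      have : Nat.gcd (2 * 3) (2 * n) = 2 * Nat.gcd 3 n := Nat.gcd_mul_left 2 3 n
      rw [hc] at this
      simpa [Nat.mul_comm] using this
    have hord2 : orderOf (q : ZMod p) ∣ 2 := by
      have := Nat.dvd_gcd hord6 hord2n
      rwa [hgcd] at this
    have hx2 : (q : ZMod p) ^ 2 = 1 := orderOf_dvd_iff_pow_eq_one.mp hord2
    have hx : (q : ZMod p) = -1 := by
      have : (q : ZMod p) ^ 2 * (q : ZMod p) = -1 := by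
        rw [← pow_succ]; exact hx3
      rw [hx2, one_mul] at this
      exact this
    -- deduce p = 3
    have hp3' : ((3 : ℕ) : ZMod p) = 0 := by
      have h0 : ((q ^ 2 - q + 1 : ℕ) : ZMod p) = 0 :=
        (ZMod.natCast_eq_zero_iff _ _).mpr hpd
      rw [Nat.cast_add, Nat.cast_sub hqq] at h0
      push_cast at h0
      rw [hx] at h0
      push_cast
      linear_combination h0
    have hpeq3 : p = 3 := by
      have := (ZMod.natCast_eq_zero_iff 3 p).mp hp3'
      have h3p : Nat.Prime 3 := by norm_num
      exact ((Nat.prime_dvd_prime_iff_eq hp h3p).mp this)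
    -- now q ≡ -1 mod 3 and 3 ∣ m; show m ≡ n mod 3
    clear_value g p
    subst hpeq3
    -- m as alternating geometric sum over ℤ
    have hsum : (m : ℤ) = ∑ i ∈ Finset.range n, (-(q : ℤ)) ^ i := by
      have hgs := geom_sum_mul (-(q : ℤ)) n
      have hneg : (-(q : ℤ)) ^ n = -((q : ℤ) ^ n) := Odd.neg_pow hn _
      have h1 : (∑ i ∈ Finset.range n, (-(q : ℤ)) ^ i) * ((q : ℤ) + 1) = (q : ℤ) ^ n + 1 := by
        have := hgs
        rw [hneg] at this
        linear_combination -this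
      have h2 : (m : ℤ) * ((q : ℤ) + 1) = (q : ℤ) ^ n + 1 := by
        exact_mod_cast congrArg (fun x : ℕ => (x : ℤ)) hm
      have hq1 : ((q : ℤ) + 1) ≠ 0 := by positivity
      exact mul_right_cancel₀ hq1 (h2.trans h1.symm)
    -- cast to ZMod 3
    have hcast : ((m : ℤ) : ZMod 3) = ∑ i ∈ Finset.range n, (-(q : ZMod 3)) ^ i := by
      rw [hsum]
      push_cast
      ring
    have hmzero : ((m : ℕ) : ZMod 3) = 0 := (ZMod.natCast_eq_zero_iff _ _).mpr hpm
    have hnz : ((n : ℕ) : ZMod 3) = 0 := by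
      have : ((m : ℤ) : ZMod 3) = (n : ZMod 3) := by
        rw [hcast, hx]
        simp
      rw [show ((m : ℤ) : ZMod 3) = ((m : ℕ) : ZMod 3) by push_cast; ring, hmzero] at this
      exact this.symm
    exact h3 ((ZMod.natCast_eq_zero_iff n 3).mp hnz)
end

section
/- Let q ≥ 2 be an integer and n an odd positive integer, and set m = (q^n + 1)/(q + 1). Then gcd(m, q^2 - q) = 1. -/
/-- Let `q ≥ 2` be an integer, `n` an odd positive integer, and `m = (q^n+1)/(q+1)`.
Then `gcd(m, q^2 - q) = 1`. -/
theorem gcd_m_q_sq_sub_q (q n : ℕ) (hq : 2 ≤ q) (hn : Odd n) (hn0 : 0 < n) :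
    Nat.gcd ((q ^ n + 1) / (q + 1)) (q ^ 2 - q) = 1 := by
  set m := (q ^ n + 1) / (q + 1) with hm_def
  have hdvd : q + 1 ∣ q ^ n + 1 := by
    simpa only [one_pow] using hn.nat_add_dvd_pow_add_pow q 1
  have hm : m * (q + 1) = q ^ n + 1 := Nat.div_mul_cancel hdvd
  have hmdvd : m ∣ q ^ n + 1 := ⟨q + 1, hm.symm⟩
  -- m is odd
  have hmodd : Odd m := by
    rcases Nat.even_or_odd q with hqe | hqo
    · -- q even: q^n + 1 is odd, and m divides it
      have h1 : Odd (q ^ n + 1) := Even.add_one (Nat.even_pow.2 ⟨hqe, hn0.ne'⟩)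
      rcases Nat.even_or_odd m with hme | hmo
      · exfalso
        have : Even (q ^ n + 1) := hm ▸ hme.mul_right (q + 1)
        exact (Nat.not_even_iff_odd.2 h1) this
      · exact hmo
    · -- q odd: use the alternating geometric sum over ℤ
      have hS : (∑ i ∈ Finset.range n, (-(q : ℤ)) ^ i) * ((q : ℤ) + 1) = (q : ℤ) ^ n + 1 := by
        have h := geom_sum_mul (-(q : ℤ)) n
        have hneg : (-(q:ℤ)) ^ n = -((q:ℤ)^n) := hn.neg_pow _
        rw [hneg] at h
        linear_combination -h
      have hcast : (m : ℤ) = ∑ i ∈ Finset.range n, (-(q : ℤ)) ^ i := by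
        have h1 : (m : ℤ) * ((q:ℤ) + 1) = (q:ℤ) ^ n + 1 := by exact_mod_cast hm
        exact mul_right_cancel₀ (by positivity) (h1.trans hS.symm)
      have hSodd : Odd (∑ i ∈ Finset.range n, (-(q : ℤ)) ^ i) := by
        rw [← Int.not_even_iff_odd, even_iff_two_dvd,
          show (2:ℤ) = ((2:ℕ):ℤ) by norm_num, ← ZMod.intCast_zmod_eq_zero_iff_dvd]
        have hq2 : (q : ZMod 2) = 1 := by
          obtain ⟨k, rfl⟩ := hqo
          push_cast
          simp [show (2:ZMod 2)=0 by decide]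
        have hn2 : (n : ZMod 2) = 1 := by
          obtain ⟨k, rfl⟩ := hn
          push_cast
          simp [show (2:ZMod 2)=0 by decide]
        push_cast
        rw [show (-(q:ZMod 2)) = 1 by rw [hq2]; decide]
        simp [hn2]
      rw [← hcast] at hSodd
      exact_mod_cast hSodd
  -- coprime with q
  have hc1 : Nat.Coprime m q := by
    have d1 : Nat.gcd m q ∣ q ^ n + 1 := (Nat.gcd_dvd_left _ _).trans hmdvd
    have d2 : Nat.gcd m q ∣ q ^ n := dvd_pow (Nat.gcd_dvd_right _ _) hn0.ne'
    have : Nat.gcd m q ∣ 1 := by simpa using Nat.dvd_sub d1 d2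
    exact Nat.dvd_one.mp this
  -- coprime with q - 1
  have hc2 : Nat.Coprime m (q - 1) := by
    have d1 : Nat.gcd m (q - 1) ∣ q ^ n + 1 := (Nat.gcd_dvd_left _ _).trans hmdvd
    have d2 : Nat.gcd m (q - 1) ∣ q ^ n - 1 := by
      refine (Nat.gcd_dvd_right _ _).trans ?_
      simpa only [one_pow] using Nat.sub_dvd_pow_sub_pow q 1 n
    have hqn : 1 ≤ q ^ n := Nat.one_le_pow _ _ (by omega)
    have d3 : Nat.gcd m (q - 1) ∣ 2 := by
      have := Nat.dvd_sub d1 d2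
      rwa [show q ^ n + 1 - (q ^ n - 1) = 2 by omega] at this
    have hgodd : Odd (Nat.gcd m (q - 1)) := by
      rcases Nat.even_or_odd (Nat.gcd m (q - 1)) with hge | hgo
      · exfalso
        have h2m : 2 ∣ m := (hge.two_dvd).trans (Nat.gcd_dvd_left _ _)
        exact (Nat.not_even_iff_odd.2 hmodd) ((even_iff_two_dvd).2 h2m)
      · exact hgo
    rcases (Nat.dvd_prime Nat.prime_two).1 d3 with h1 | h2
    · exact h1
    · exfalso
      rw [h2] at hgodd
      exact (Nat.not_even_iff_odd.2 hgodd) even_two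
  have : Nat.Coprime m (q * (q - 1)) := Nat.Coprime.mul_right hc1 hc2
  have hq2 : q ^ 2 - q = q * (q - 1) := by
    cases q with
    | zero => simp
    | succ k => rw [pow_two, Nat.succ_sub_one, Nat.mul_succ]; omega
  rw [hq2]
  exact this
end

section
/- Let q be a prime power and F_{q^2} the field with q^2 elements. For any a, b, c, d in F_{q^2} satisfying d^{q+1} - b^{q+1} = 1, a^{q+1} - c^{q+1} = 1, and a^q·b = c^q·d, there exists ζ in F_{q^2} with ζ^{q+1} = 1, b = ζ·c^q, and d = ζ·a^q. -/
/-- For `a, b, c, d` in the field with `q^2` elements satisfying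
`d^{q+1} - b^{q+1} = 1`, `a^{q+1} - c^{q+1} = 1` and `a^q b = c^q d`, there exists
`ζ` with `ζ^{q+1} = 1`, `b = ζ c^q` and `d = ζ a^q`. -/
theorem hermitian_matrix_entries_zeta (q : ℕ) (hq : IsPrimePow q)
    (F : Type*) [Field F] [Fintype F] (hF : Fintype.card F = q ^ 2)
    (a b c d : F)
    (h1 : d ^ (q + 1) - b ^ (q + 1) = 1)
    (h2 : a ^ (q + 1) - c ^ (q + 1) = 1)
    (h3 : a ^ q * b = c ^ q * d) :
    ∃ ζ : F, ζ ^ (q + 1) = 1 ∧ b = ζ * c ^ q ∧ d = ζ * a ^ q := by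
  have hqpos : 0 < q := hq.pos
  have key : ∀ x : F, (x ^ (q + 1)) ^ q = x ^ (q + 1) := by
    intro x
    have h := FiniteField.pow_card x
    rw [hF] at h
    calc (x ^ (q + 1)) ^ q = x ^ (q ^ 2) * x ^ q := by ring
      _ = x * x ^ q := by rw [h]
      _ = x ^ (q + 1) := by ring
  have hswap : ∀ x : F, (x ^ q) ^ (q + 1) = x ^ (q + 1) := by
    intro x
    rw [← pow_mul, Nat.mul_comm, pow_mul, key]
  by_cases ha : a = 0
  · subst ha
    rw [zero_pow hqpos.ne', zero_mul] at h3
    rw [zero_pow hqpos.ne']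
    rw [zero_pow (by omega)] at h2
    have hC : c ^ (q + 1) = -1 := by linear_combination -h2
    have hc : c ≠ 0 := by
      intro h; rw [h, zero_pow (by omega : q + 1 ≠ 0)] at hC
      exact one_ne_zero (by linear_combination hC : (1:F) = 0)
    have hcq : c ^ q ≠ 0 := pow_ne_zero _ hc
    have hd : d = 0 := by
      rcases mul_eq_zero.mp h3.symm with h | h
      · exact absurd h hcq
      · exact h
    subst hd
    rw [zero_pow (by omega : q + 1 ≠ 0)] at h1
    have hB : b ^ (q + 1) = -1 := by linear_combination -h1
    refine ⟨b * (c ^ q)⁻¹, ?_, ?_, by rw [mul_zero]⟩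
    · rw [mul_pow, inv_pow, hswap, hB, hC]
      simp
    · field_simp
  · have hA0 : a ^ (q + 1) ≠ 0 := pow_ne_zero _ ha
    have haq : a ^ q ≠ 0 := pow_ne_zero _ ha
    have h4 : (a ^ q * b) ^ (q + 1) = (c ^ q * d) ^ (q + 1) := by rw [h3]
    rw [mul_pow, mul_pow, hswap, hswap] at h4
    have hAD : a ^ (q + 1) = d ^ (q + 1) := by
      have hB : b ^ (q + 1) = d ^ (q + 1) - 1 := by linear_combination -h1
      have hC : c ^ (q + 1) = a ^ (q + 1) - 1 := by linear_combination -h2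
      rw [hB, hC] at h4
      linear_combination -h4
    refine ⟨d * (a ^ q)⁻¹, ?_, ?_, ?_⟩
    · rw [mul_pow, inv_pow, hswap, ← hAD]
      field_simp
    · field_simp
      linear_combination h3
    · field_simp
end

section
/- Let q = p^h be a prime power with p prime. The set E of matrices of the form [[a, a-1, 0], [-a+1, -a+2, 0], [0, 0, 1]] with a in F_{q^2} satisfying a^q + a = 2 forms a subgroup of GL(3, F_{q^2}) of order q, and this group is commutative with every nontrivial element of order p. -/
open Matrix Polynomial

private def Mm {F : Type*} [Field F] (a : F) : Matrix (Fin 3) (Fin 3) F :=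
  !![a, a - 1, 0; -a + 1, -a + 2, 0; 0, 0, 1]

private lemma Mm_mul {F : Type*} [Field F] (a b : F) : Mm a * Mm b = Mm (a + b - 1) := by
  ext i j
  fin_cases i <;> fin_cases j <;>
    simp [Mm, Matrix.mul_apply, Fin.sum_univ_three] <;> ring

private lemma Mm_one {F : Type*} [Field F] : (Mm 1 : Matrix (Fin 3) (Fin 3) F) = 1 := by
  ext i j
  fin_cases i <;> fin_cases j <;> simp [Mm, Matrix.one_apply] <;>
    norm_num [Matrix.vecHead, Matrix.vecTail]

private lemma Mm_inj {F : Type*} [Field F] {a b : F} (hab : Mm a = Mm b) : a = b := by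
  have := congrFun (congrFun hab 0) 0
  simpa [Mm] using this

private lemma Mm_pow {F : Type*} [Field F] (a : F) (n : ℕ) :
    (Mm a) ^ n = Mm ((n : F) * (a - 1) + 1) := by
  induction n with
  | zero => simp [Mm_one.symm]
  | succ n ih =>
      rw [pow_succ, ih, Mm_mul]
      push_cast
      ring_nf

/-- The set of matrices `[[a, a-1, 0], [-a+1, -a+2, 0], [0, 0, 1]]` with `a` in the
field of `q^2` elements satisfying `a^q + a = 2` is (the image of) a subgroup of
`GL(3, F_{q^2})` of order `q`, which is commutative with every nontrivial element
of order `p`, where `q = p^h`. -/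
theorem Eq_subgroup_of_GL (p h : ℕ) (hp : p.Prime) (hh : 0 < h) (q : ℕ) (hq : q = p ^ h)
    (F : Type*) [Field F] [Fintype F] (hF : Fintype.card F = q ^ 2) :
    ∃ H : Subgroup (Matrix.GeneralLinearGroup (Fin 3) F),
      ((fun g : Matrix.GeneralLinearGroup (Fin 3) F => (g : Matrix (Fin 3) (Fin 3) F)) ''
          (H : Set (Matrix.GeneralLinearGroup (Fin 3) F)) =
        {M : Matrix (Fin 3) (Fin 3) F | ∃ a : F, a ^ q + a = 2 ∧
          M = !![a, a - 1, 0; -a + 1, -a + 2, 0; 0, 0, 1]}) ∧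
      Nat.card H = q ∧
      (∀ g ∈ H, ∀ g' ∈ H, g * g' = g' * g) ∧
      (∀ g ∈ H, g ≠ 1 → orderOf g = p) := by
  classical
  haveI : Fact p.Prime := ⟨hp⟩
  have hq1 : 1 < q := hq ▸ Nat.one_lt_pow hh.ne' hp.one_lt
  have hq0 : 0 < q := by omega
  -- characteristic
  haveI : CharP F (ringChar F) := ringChar.charP F
  obtain ⟨n, hr, hcard⟩ := FiniteField.card F (ringChar F)
  have hrp : ringChar F = p := by
    have hdvd : p ∣ (ringChar F) ^ (n : ℕ) := by
      rw [← hcard, hF, hq]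
      exact Dvd.dvd.pow (dvd_pow_self p hh.ne') (by positivity)
    have := (Nat.Prime.dvd_of_dvd_pow hp hdvd)
    exact ((Nat.prime_dvd_prime_iff_eq hp hr).mp this).symm
  haveI : CharP F p := hrp ▸ ringChar.charP F
  haveI : ExpChar F p := .prime hp
  -- Frobenius
  set φ : F →+* F := iterateFrobenius F p h with hφ
  have hfrob : ∀ x : F, x ^ q = φ x := by
    intro x; rw [hφ, iterateFrobenius_def, hq]
  have hpow2 : ∀ x : F, (x ^ q) ^ q = x := by
    intro x
    rw [← pow_mul, ← sq, ← hF, FiniteField.pow_card]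
  -- root counting helper
  have key : ∀ P : F[X], P ≠ 0 → Nat.card {x : F | P.IsRoot x} ≤ P.natDegree := by
    intro P hP
    rw [Nat.card_coe_set_eq, Set.ncard_eq_toFinset_card']
    apply Polynomial.card_le_degree_of_subset_roots
    intro x hx
    rw [Finset.mem_val, Set.mem_toFinset] at hx
    exact Polynomial.mem_roots'.mpr ⟨hP, hx⟩
  -- the additive map x ↦ x^q + x and its kernel
  set L : F →+ F := φ.toAddMonoidHom + AddMonoidHom.id F with hL
  have hLval : ∀ x : F, L x = x ^ q + x := by
    intro x; simp [hL, hfrob]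
  -- kernel card ≤ q
  have hP1 : (X ^ q + X : F[X]).degree = q := by
    rw [degree_add_eq_left_of_degree_lt, degree_X_pow]
    rw [degree_X_pow, degree_X]
    exact_mod_cast hq1
  have hP1ne : (X ^ q + X : F[X]) ≠ 0 := by
    intro h0
    rw [h0, degree_zero] at hP1
    exact absurd hP1.symm (by simp)
  have hkerset : ((L.ker : AddSubgroup F) : Set F) = {x : F | (X ^ q + X : F[X]).IsRoot x} := by
    ext x
    simp [AddMonoidHom.mem_ker, hLval, Polynomial.IsRoot]
  have hker_le : Nat.card L.ker ≤ q := by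
    have := key _ hP1ne
    rw [Polynomial.natDegree_eq_of_degree_eq_some hP1] at this
    rw [← hkerset] at this
    exact this
  -- range card ≤ q
  have hP2 : (X ^ q - X : F[X]).degree = q := by
    rw [degree_sub_eq_left_of_degree_lt, degree_X_pow]
    rw [degree_X_pow, degree_X]
    exact_mod_cast hq1
  have hP2ne : (X ^ q - X : F[X]) ≠ 0 := by
    intro h0
    rw [h0, degree_zero] at hP2
    exact absurd hP2.symm (by simp)
  have hrange_sub : ((L.range : AddSubgroup F) : Set F) ⊆ {x : F | (X ^ q - X : F[X]).IsRoot x} := by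
    rintro y ⟨x, rfl⟩
    have : (L x) ^ q = L x := by
      rw [hLval]
      have : (x ^ q + x) ^ q = (x ^ q) ^ q + x ^ q := by
        rw [hfrob (x ^ q + x), map_add φ, hfrob (x^q), hfrob x]
      rw [this, hpow2, add_comm]
    simp [Polynomial.IsRoot, this]
  have hrange_le : Nat.card L.range ≤ q := by
    have h2 := key _ hP2ne
    rw [Polynomial.natDegree_eq_of_degree_eq_some hP2] at h2
    refine le_trans ?_ h2
    have h3 := Set.ncard_le_ncard hrange_sub (Set.toFinite _)
    rwa [← Nat.card_coe_set_eq, ← Nat.card_coe_set_eq] at h3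
  -- kernel card = q
  have hcardF : Nat.card F = q ^ 2 := by rw [Nat.card_eq_fintype_card, hF]
  have hiso : Nat.card (F ⧸ L.ker) = Nat.card L.range :=
    Nat.card_congr (QuotientAddGroup.quotientKerEquivRange L).toEquiv
  have hprod : Nat.card (F ⧸ L.ker) * Nat.card L.ker = q ^ 2 := by
    rw [← hcardF]
    exact (AddSubgroup.card_eq_card_quotient_mul_card_addSubgroup L.ker).symm
  have hker_eq : Nat.card L.ker = q := by
    have h1 : Nat.card (F ⧸ L.ker) ≤ q := hiso ▸ hrange_le
    have h5 : q * q ≤ q * Nat.card L.ker := by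
      calc q * q = Nat.card (F ⧸ L.ker) * Nat.card L.ker := by rw [hprod, sq]
        _ ≤ q * Nat.card L.ker := Nat.mul_le_mul_right _ h1
    have h6 := Nat.le_of_mul_le_mul_left h5 hq0
    omega
  -- card of the solution set of a^q + a = 2
  have fwd : ∀ t : F, t ∈ L.ker → (t + 1) ^ q + (t + 1) = 2 := by
    intro t ht
    rw [AddMonoidHom.mem_ker, hLval] at ht
    have h4 : (t + 1) ^ q = t ^ q + 1 := by
      rw [hfrob (t + 1), map_add, _root_.map_one, hfrob t]
    rw [h4]
    linear_combination ht
  have bwd : ∀ a : F, a ^ q + a = 2 → (a - 1) ∈ L.ker := by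
    intro a ha
    rw [AddMonoidHom.mem_ker, hLval]
    have h4 : (a - 1) ^ q = a ^ q - 1 := by
      rw [hfrob (a - 1), map_sub, _root_.map_one, hfrob a]
    rw [h4]
    linear_combination ha
  have e : L.ker ≃ {a : F // a ^ q + a = 2} :=
    ⟨fun t => ⟨(t : F) + 1, fwd t t.2⟩, fun a => ⟨(a : F) - 1, bwd a a.2⟩,
      fun t => by ext; simp, fun a => by ext; simp⟩
  have hSone : Nat.card {a : F // a ^ q + a = 2} = q := by
    rw [← Nat.card_congr e, hker_eq]
  -- algebraic conditions
  have mulcond : ∀ a b : F, a ^ q + a = 2 → b ^ q + b = 2 →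
      (a + b - 1) ^ q + (a + b - 1) = 2 := by
    intro a b ha hb
    have h4 : (a + b - 1) ^ q = a ^ q + b ^ q - 1 := by
      rw [hfrob (a + b - 1), map_sub, map_add, _root_.map_one, hfrob a, hfrob b]
    rw [h4]; linear_combination ha + hb
  have invcond : ∀ a : F, a ^ q + a = 2 → (2 - a) ^ q + (2 - a) = 2 := by
    intro a ha
    have h4 : (2 - a) ^ q = 2 - a ^ q := by
      rw [hfrob (2 - a), map_sub, map_ofNat, hfrob a]
    rw [h4]; linear_combination -ha
  have onecond : (1 : F) ^ q + 1 = 2 := by rw [one_pow]; norm_num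
  have MmU : ∀ a : F, Mm a * Mm (2 - a) = 1 := by
    intro a
    rw [Mm_mul, show a + (2 - a) - 1 = (1 : F) by ring, Mm_one]
  let U : F → Matrix.GeneralLinearGroup (Fin 3) F := fun a =>
    ⟨Mm a, Mm (2 - a), MmU a, by
      have h5 := MmU (2 - a)
      rwa [show (2 : F) - (2 - a) = a by ring] at h5⟩
  let H : Subgroup (Matrix.GeneralLinearGroup (Fin 3) F) :=
    { carrier := {g | ∃ a : F, a ^ q + a = 2 ∧ (g : Matrix (Fin 3) (Fin 3) F) = Mm a}
      one_mem' := ⟨1, onecond, by rw [Units.val_one, Mm_one]⟩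
      mul_mem' := by
        rintro g g' ⟨a, ha, hga⟩ ⟨b, hb, hgb⟩
        exact ⟨a + b - 1, mulcond a b ha hb, by rw [Units.val_mul, hga, hgb, Mm_mul]⟩
      inv_mem' := by
        rintro g ⟨a, ha, hga⟩
        refine ⟨2 - a, invcond a ha, ?_⟩
        have h1 : (↑g : Matrix (Fin 3) (Fin 3) F) * Mm (2 - a) = 1 := by
          rw [hga]; exact MmU a
        calc (↑g⁻¹ : Matrix (Fin 3) (Fin 3) F)
            = ↑g⁻¹ * ((↑g : Matrix (Fin 3) (Fin 3) F) * Mm (2 - a)) := by rw [h1, mul_one]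
          _ = (↑g⁻¹ * ↑g) * Mm (2 - a) := by rw [mul_assoc]
          _ = Mm (2 - a) := by rw [← Units.val_mul, inv_mul_cancel, Units.val_one, one_mul] }
  have hmem : ∀ g, g ∈ H ↔ ∃ a : F, a ^ q + a = 2 ∧ (g : Matrix (Fin 3) (Fin 3) F) = Mm a :=
    fun g => Iff.rfl
  refine ⟨H, ?_, ?_, ?_, ?_⟩
  · ext M'
    constructor
    · rintro ⟨g, hg, rfl⟩
      obtain ⟨a, ha, hga⟩ := (hmem g).mp hg
      exact ⟨a, ha, hga⟩
    · rintro ⟨a, ha, rfl⟩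
      exact ⟨U a, (hmem _).mpr ⟨a, ha, rfl⟩, rfl⟩
  · have bij : Function.Bijective
        (fun a : {a : F // a ^ q + a = 2} => (⟨U a.1, (hmem _).mpr ⟨a.1, a.2, rfl⟩⟩ : H)) := by
      constructor
      · intro a b hab
        apply Subtype.ext
        have h6 := congrArg
          (fun g : H => ((g : Matrix.GeneralLinearGroup (Fin 3) F) : Matrix (Fin 3) (Fin 3) F)) hab
        exact Mm_inj h6
      · rintro ⟨g, hg⟩
        obtain ⟨a, ha, hga⟩ := (hmem g).mp hg
        refine ⟨⟨a, ha⟩, ?_⟩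
        apply Subtype.ext
        apply Units.ext
        exact hga.symm
    rw [← Nat.card_eq_of_bijective _ bij]
    exact hSone
  · intro g hg g' hg'
    obtain ⟨a, ha, hga⟩ := (hmem g).mp hg
    obtain ⟨b, hb, hgb⟩ := (hmem g').mp hg'
    apply Units.ext
    rw [Units.val_mul, Units.val_mul, hga, hgb, Mm_mul, Mm_mul,
      show a + b - 1 = b + a - 1 by ring]
  · intro g hg hg1
    obtain ⟨a, ha, hga⟩ := (hmem g).mp hg
    have hgp : g ^ p = 1 := by
      apply Units.ext
      rw [Units.val_pow_eq_pow_val, hga, Mm_pow, Units.val_one,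
        show ((p : F)) = 0 from CharP.cast_eq_zero F p,
        show (0 : F) * (a - 1) + 1 = 1 by ring, Mm_one]
    exact orderOf_eq_prime hgp hg1
end

section
/- Let q ≥ 2 and M ≥ 3 be integers with gcd(M, q-1) = 1, gcd(M, q^2-q) = 1. Suppose that for every ℓ1 in {1,…,M-1} there exists ℓ2 in {1,…,M-1} with ℓ1(q-1) + ⌈ℓ1(q^2-q)/M⌉·M = ℓ2(q^2-q) + ⌈ℓ2(q-1)/M⌉·M. Then a contradiction follows; i.e., the numerical semigroups ⟨M, {ℓ(q-1)+⌈ℓ(q^2-q)/M⌉M}⟩ and ⟨M, {ℓ(q^2-q)+⌈ℓ(q-1)/M⌉M}⟩ are distinct when M ≥ 3 (more precisely, when M > 1). -/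
/-- Step 1 of distinguishing `H(Q̃_∞^1)` from `H(Q̃_∞^2)`: if for every
`ℓ1 ∈ {1,…,M-1}` there is `ℓ2 ∈ {1,…,M-1}` with
`ℓ1(q-1) + ⌈ℓ1(q^2-q)/M⌉M = ℓ2(q^2-q) + ⌈ℓ2(q-1)/M⌉M`, then a contradiction follows. -/
theorem semigroups_distinct (q M : ℕ) (hq : 2 ≤ q) (hM : 3 ≤ M)
    (h1 : Nat.gcd M (q - 1) = 1) (h2 : Nat.gcd M (q ^ 2 - q) = 1)
    (H : ∀ ℓ1 ∈ Finset.Icc 1 (M - 1), ∃ ℓ2 ∈ Finset.Icc 1 (M - 1),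
      ℓ1 * (q - 1) + ((ℓ1 * (q ^ 2 - q)) ⌈/⌉ M) * M =
        ℓ2 * (q ^ 2 - q) + ((ℓ2 * (q - 1)) ⌈/⌉ M) * M) :
    False := by
  set a := q - 1 with ha_def
  set b := q ^ 2 - q with hb_def
  clear_value a b
  have ha1 : 1 ≤ a := by omega
  have hab : b = q * a := by
    have hq2 : q ≤ q ^ 2 := by nlinarith
    rw [ha_def, hb_def, pow_two, Nat.mul_sub, mul_one]
  have hb2a : 2 * a ≤ b := by
    rw [hab]; exact Nat.mul_le_mul_right a hq
  obtain ⟨ℓ2, hℓ2mem, hE⟩ := H 1 (by simp [Finset.mem_Icc]; omega)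
  simp only [one_mul] at hE
  rw [Finset.mem_Icc] at hℓ2mem
  rcases eq_or_lt_of_le hℓ2mem.1 with h | hℓ2
  · -- ℓ2 = 1 case
    rw [← h] at hE
    simp only [one_mul] at hE
    have hmod : a % M = b % M := by
      have := congrArg (· % M) hE
      simpa [Nat.add_mul_mod_self_right] using this
    have hdvd : M ∣ b - a :=
      Nat.dvd_of_mod_eq_zero (Nat.sub_mod_eq_zero_of_mod_eq hmod.symm)
    have hba : b - a = a * a := by
      rw [hab]
      have h' : q * a - a = (q - 1) * a := by rw [Nat.sub_mul, one_mul]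
      rw [h', ← ha_def]
    rw [hba] at hdvd
    have hcop : Nat.Coprime M (a * a) := Nat.Coprime.mul_right h1 h1
    have hM1 : M ∣ 1 := by
      calc M ∣ Nat.gcd M (a * a) := Nat.dvd_gcd dvd_rfl hdvd
        _ = 1 := hcop
    rw [Nat.dvd_one] at hM1
    omega
  · -- ℓ2 ≥ 2 case: size contradiction
    have hMpos : 0 < M := by omega
    set X := (b ⌈/⌉ M) * M with hX
    set Y := ((ℓ2 * a) ⌈/⌉ M) * M with hY
    set Z := ℓ2 * b with hZ
    have hL : X ≤ b + M - 1 := by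
      rw [hX, Nat.ceilDiv_eq_add_pred_div]
      exact Nat.div_mul_le_self _ _
    have hR1 : 1 ≤ (ℓ2 * a) ⌈/⌉ M := by
      rw [Nat.ceilDiv_eq_add_pred_div, Nat.one_le_div_iff hMpos]
      have h1a : 1 ≤ ℓ2 * a := Nat.one_le_iff_ne_zero.2 (by positivity)
      omega
    have e1 : 2 * b ≤ Z := by
      rw [hZ]; exact Nat.mul_le_mul hℓ2 (le_refl b)
    have e2 : M ≤ Y := by
      calc M = 1 * M := (one_mul M).symm
        _ ≤ ((ℓ2 * a) ⌈/⌉ M) * M := Nat.mul_le_mul_right M hR1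
        _ = Y := hY.symm
    clear_value X Y Z
    -- hE : a + X = Z + Y
    omega
end

section
/- Let p be a prime, q = p^a, b a divisor of a, n ≥ 3 odd, s a divisor of m = (q^n+1)/(q+1), and c_0 ∈ F_{q^2} with c_0^q + c_0 = 0, c_0 ≠ 0. For parameters (α, β, γ) with α^{q+1} ∈ F_{p^b}^*, γ^{m/s} = α^{-(q-1)}, and β^q·α + β·α^q = α^{q+1} - 1, the composition rule σ_{α,β,γ} ∘ σ_{α',β',γ'} = σ_{α·α', β/(α')^q + α·β', γ·γ'} makes this parameter set into a group; in particular the set of such triples is closed under this operation and contains the identity (1, 0, 1). -/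
/-- A parameter triple `(α, β, γ)` for an automorphism `σ_{α,β,γ}` of `X̃_{a,b,n,s}`:
`α, β` lie in `F_{q^2}` (inside `F_{q^{2n}}`), `α^{q+1} ∈ F_{p^b}^*`,
`γ^{m/s} = α^{-(q-1)}`, and `β^q α + β α^q = α^{q+1} - 1`. -/
def IsAutTriple {E : Type*} [Field E] (p b q M : ℕ) (t : E × E × E) : Prop :=
  t.1 ^ q ^ 2 = t.1 ∧ t.2.1 ^ q ^ 2 = t.2.1 ∧
    t.1 ^ (q + 1) ≠ 0 ∧ (t.1 ^ (q + 1)) ^ p ^ b = t.1 ^ (q + 1) ∧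
    t.2.2 ^ M = (t.1 ^ (q - 1))⁻¹ ∧
    t.2.1 ^ q * t.1 + t.2.1 * t.1 ^ q = t.1 ^ (q + 1) - 1

/-- The set of automorphism parameter triples contains the identity `(1,0,1)` and is
closed under the composition rule
`σ_{α,β,γ} ∘ σ_{α',β',γ'} = σ_{αα', β/(α')^q + αβ', γγ'}`. -/
theorem aut_triples_group (p a b n s q m : ℕ) (hp : p.Prime) (ha : 0 < a)
    (hq : q = p ^ a) (hb : b ∣ a) (hn : Odd n) (hn3 : 3 ≤ n)
    (hm : m * (q + 1) = q ^ n + 1) (hs : s ∣ m) (hs0 : 0 < s)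
    (E : Type*) [Field E] [Fintype E] (hE : Fintype.card E = q ^ (2 * n))
    (c0 : E) (hc0 : c0 ^ q + c0 = 0) (hc0' : c0 ≠ 0) :
    IsAutTriple (E := E) p b q (m / s) (1, 0, 1) ∧
      ∀ t t' : E × E × E, IsAutTriple (E := E) p b q (m / s) t →
        IsAutTriple (E := E) p b q (m / s) t' →
        IsAutTriple (E := E) p b q (m / s)
          (t.1 * t'.1, t.2.1 / t'.1 ^ q + t.1 * t'.2.1, t.2.2 * t'.2.2) := by
  have hq0 : q ≠ 0 := by
    rw [hq]; exact pow_ne_zero _ hp.pos.ne'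
  -- characteristic of E is p
  haveI := Fact.mk hp
  have hcard : Fintype.card E = p ^ (a * (2 * n)) := by
    rw [hE, hq, ← pow_mul]
  obtain ⟨k, hr, hcard'⟩ := FiniteField.card E (ringChar E)
  have hrp : ringChar E = p := by
    have hdvd : ringChar E ∣ p ^ (a * (2 * n)) := by
      refine Dvd.intro_left ((ringChar E) ^ (k - 1 : ℕ)) ?_
      rw [← pow_succ, show (k:ℕ) - 1 + 1 = (k:ℕ) from Nat.sub_add_cancel k.one_le, ← hcard', hcard]
    exact (Nat.prime_dvd_prime_iff_eq hr hp).mp (hr.dvd_of_dvd_pow hdvd)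
  haveI : CharP E p := hrp ▸ ringChar.charP E
  have hadd : ∀ x y : E, (x + y) ^ q = x ^ q + y ^ q := by
    intro x y; rw [hq, add_pow_char_pow]
  constructor
  · exact ⟨one_pow _, zero_pow (pow_ne_zero 2 hq0), by simp, by simp, by simp, by rw [zero_pow hq0]; ring⟩
  · rintro ⟨α, β, γ⟩ ⟨α', β', γ'⟩ ⟨h1, h2, h3, h4, h5, h6⟩ ⟨h1', h2', h3', h4', h5', h6'⟩
    simp only at h1 h2 h3 h4 h5 h6 h1' h2' h3' h4' h5' h6' ⊢
    have hα : α ≠ 0 := fun h => h3 (by simp [h, zero_pow])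
    have hα' : α' ≠ 0 := fun h => h3' (by simp [h, zero_pow])
    have hα'q : α' ^ q ≠ 0 := pow_ne_zero _ hα'
    have hdivq : (β / α' ^ q) ^ q = β ^ q / α' := by
      rw [div_pow, ← pow_mul, ← sq, h1']
    refine ⟨?_, ?_, ?_, ?_, ?_, ?_⟩
    · rw [mul_pow, h1, h1']
    · have : (β / α' ^ q + α * β') ^ q ^ 2
          = (β / α' ^ q) ^ q ^ 2 + (α * β') ^ q ^ 2 := by
        simp only [sq, pow_mul]; rw [hadd, hadd]
      rw [this, div_pow, mul_pow, h1, h2, h2', ← pow_mul, mul_comm q (q^2), pow_mul, h1']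
    · rw [mul_pow]; exact mul_ne_zero h3 h3'
    · rw [mul_pow, mul_pow, h4, h4']
    · rw [mul_pow, h5, h5', mul_pow, mul_inv]
    · rw [hadd, hdivq, mul_pow α β']
      field_simp
      ring_nf
      ring_nf at h6 h6'
      linear_combination (α' ^ q) * h6 + (α ^ q * α * α' ^ q) * h6'
end
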